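/- Let R be a Prüfer domain and let S be a faithfully flat Ohm-Rush R-algebra such that mS is a prime ideal of S for every maximal ideal m of R. Then S is a Gaussian R-algebra. -/

import Mathlib

/-!
Locally at a maximal ideal `m`, `R_m` is a valuation domain, so the finitely generated content
`c(f)` becomes principal there, generated by some `a ∈ c(f)`: for a suitable `w ∉ m` one gets
`w f = a f₁` with `f₁ ∉ mS`. As `mS` is prime, `f₁ g₁ ∉ mS`, so `c(f₁ g₁) ⊄ m`, and flatness
(`c(r f) = r c(f)`) turns this into `c(f) c(g) ⊆ c(fg)` up to a factor outside `m`. An inclusion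
that holds up to a factor outside every maximal ideal holds outright; the reverse inclusion
`c(fg) ⊆ c(f) c(g)` is true in any Ohm-Rush algebra.
-/

/-- The Ohm-Rush content of an element `f` of the `R`-algebra `S`:
the intersection of all ideals `I` of `R` such that `f ∈ IS`. -/
def orc (R S : Type*) [CommRing R] [CommRing S] [Algebra R S] (f : S) : Ideal R :=
  sInf {I : Ideal R | f ∈ I.map (algebraMap R S)}

/-- `S` is an Ohm-Rush `R`-algebra if `f ∈ orc(f)·S` for every `f ∈ S`. -/
def IsOhmRushAlgebra (R S : Type*) [CommRing R] [CommRing S] [Algebra R S] : Prop :=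
  ∀ f : S, f ∈ (orc R S f).map (algebraMap R S)

/-- `S` is a content `R`-algebra if it is a faithfully flat Ohm-Rush `R`-algebra
satisfying the Dedekind–Mertens condition. -/
def IsContentAlgebra (R S : Type*) [CommRing R] [CommRing S] [Algebra R S] : Prop :=
  Module.FaithfullyFlat R S ∧ IsOhmRushAlgebra R S ∧
    ∀ f g : S, ∃ n : ℕ, 1 ≤ n ∧
      orc R S f ^ n * orc R S g = orc R S f ^ (n - 1) * orc R S (f * g)

/-- `S` is a semicontent `R`-algebra if it is a faithfully flat Ohm-Rush `R`-algebra and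
for every multiplicatively closed subset `W ⊆ R` and all `f, g ∈ S` with `orc(f)·R_W = R_W`,
one has `orc(fg)·R_W = orc(g)·R_W`. -/
def IsSemicontentAlgebra (R S : Type*) [CommRing R] [CommRing S] [Algebra R S] : Prop :=
  Module.FaithfullyFlat R S ∧ IsOhmRushAlgebra R S ∧
    ∀ (W : Submonoid R) (f g : S),
      (orc R S f).map (algebraMap R (Localization W)) = ⊤ →
      (orc R S (f * g)).map (algebraMap R (Localization W)) =
        (orc R S g).map (algebraMap R (Localization W))

/-- `S` is a weak content `R`-algebra if it is an Ohm-Rush `R`-algebra and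
`orc(f)·orc(g) ⊆ √(orc(fg))` for all `f, g ∈ S`. -/
def IsWeakContentAlgebra (R S : Type*) [CommRing R] [CommRing S] [Algebra R S] : Prop :=
  IsOhmRushAlgebra R S ∧
    ∀ f g : S, orc R S f * orc R S g ≤ (orc R S (f * g)).radical

/-- `S` is a Gaussian `R`-algebra if it is an Ohm-Rush `R`-algebra and
`orc(fg) = orc(f)·orc(g)` for all `f, g ∈ S`. -/
def IsGaussianAlgebra (R S : Type*) [CommRing R] [CommRing S] [Algebra R S] : Prop :=
  IsOhmRushAlgebra R S ∧ ∀ f g : S, orc R S (f * g) = orc R S f * orc R S g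

namespace Ideal

variable {R : Type*} [CommRing R]

open TensorProduct in
theorem mem_map_colon_singleton_of_algebraMap_mul_mem {S : Type*} [CommRing S] [Algebra R S]
    [Module.Flat R S] {J : Ideal R} {r : R} {s : S}
    (h : algebraMap R S r * s ∈ J.map (algebraMap R S)) :
    s ∈ (J.colon {r}).map (algebraMap R S) := by
  have tmul_eq_zero (I : Ideal R) (t : R) (x : S) :
      x ⊗ₜ[R] Quotient.mk I t = 0 ↔ algebraMap R S t * x ∈ I.map (algebraMap R S) := by
    rw [← (tensorQuotEquivQuotSMul S I).map_eq_zero_iff, tensorQuotEquivQuotSMul_tmul_mk,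
      Submodule.Quotient.mk_eq_zero, smul_top_eq_map, Submodule.restrictScalars_mem,
      Algebra.smul_def]
  set K := J.colon {r}
  let ψ : R →ₗ[R] R ⧸ J := J.mkQ ∘ₗ LinearMap.lsmul R R r
  have hK : K = LinearMap.ker ψ := by
    ext x
    simp [K, ψ, mul_comm, -map_mul, Quotient.eq_zero_iff_mem]
  -- multiplication by `r` embeds `R ⧸ (J : r)` into `R ⧸ J`, and `S ⊗ -` keeps it injective
  let φ : (R ⧸ K) →ₗ[R] R ⧸ J := K.liftQ ψ hK.le
  have hφ : Function.Injective (φ.lTensor S) :=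
    Module.Flat.lTensor_preserves_injective_linearMap φ
      (LinearMap.ker_eq_bot.mp (K.ker_liftQ_eq_bot' ψ hK))
  have hs : s ⊗ₜ[R] Quotient.mk K 1 = 0 := by
    apply hφ
    rw [LinearMap.lTensor_tmul, map_zero]
    change s ⊗ₜ[R] Quotient.mk J (r * 1) = 0
    rwa [mul_one, tmul_eq_zero]
  simpa using (tmul_eq_zero K 1 s).mp hs

theorem le_of_forall_isMaximal_exists_notMem_span_singleton_mul_le {I J : Ideal R}
    (h : ∀ m : Ideal R, m.IsMaximal → ∃ c ∉ m, span {c} * I ≤ J) : I ≤ J := by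
  rw [← SetLike.coe_subset_coe, ← Submodule.colon_eq_top_iff_subset]
  by_contra hne
  obtain ⟨m, hm, hle⟩ := exists_le_maximal _ hne
  obtain ⟨c, hcm, hc⟩ := h m hm
  exact hcm (hle (Submodule.mem_colon.mpr (span_singleton_mul_le_iff.mp hc)))

variable {m : Ideal R} [m.IsPrime]

theorem exists_notMem_span_singleton_mul_le_of_map_le {I J : Ideal R} (hI : I.FG)
    (h : I.map (algebraMap R (Localization.AtPrime m)) ≤
      J.map (algebraMap R (Localization.AtPrime m))) :
    ∃ w ∉ m, span {w} * I ≤ J := by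
  suffices ¬ J.colon (I : Set R) ≤ m by
    obtain ⟨w, hw, hwm⟩ := SetLike.not_le_iff_exists.mp this
    exact ⟨w, hwm, span_singleton_mul_le_iff.mpr (Submodule.mem_colon.mp hw)⟩
  obtain ⟨t, rfl⟩ := hI
  have hcolon : J.colon (span (t : Set R) : Set R) = t.inf fun x => J.colon {x} := by
    rw [colon_span, ← Set.biUnion_of_singleton (t : Set R)]
    simp only [Submodule.colon_iUnion, Finset.inf_eq_iInf, Finset.mem_coe]
  rw [hcolon, IsPrime.inf_le' ‹_›]
  rintro ⟨x, hx, hxm⟩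
  obtain ⟨w, hw, hwx⟩ :=
    (IsLocalization.algebraMap_mem_map_algebraMap_iff m.primeCompl _ J x).mp
      (h (mem_map_of_mem _ (subset_span hx)))
  exact hw (hxm (by simpa [mul_comm] using hwx))

theorem exists_mem_notMem_span_singleton_mul_le_span_singleton [IsDomain R]
    [ValuationRing (Localization.AtPrime m)] {I : Ideal R} (hI : I.FG) :
    ∃ a ∈ I, ∃ w ∉ m, span {w} * I ≤ span {a} := by
  obtain ⟨y, hy⟩ :=
    (IsBezout.isPrincipal_of_FG _ (hI.map (algebraMap R (Localization.AtPrime m)))).principal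
  obtain ⟨⟨⟨a, ha⟩, s⟩, hys⟩ := (IsLocalization.mem_map_algebraMap_iff m.primeCompl _).mp
    (hy ▸ Submodule.mem_span_singleton_self y)
  refine ⟨a, ha, exists_notMem_span_singleton_mul_le_of_map_le hI ?_⟩
  rw [hy, map_span, Set.image_singleton, span_singleton_le_span_singleton]
  exact (IsLocalization.map_units _ s).dvd_mul_right.mp (hys ▸ dvd_rfl)

end Ideal

section OhmRush

variable {R S : Type*} [CommRing R] [CommRing S] [Algebra R S]

theorem orc_le_of_mem_map {f : S} {I : Ideal R} (h : f ∈ I.map (algebraMap R S)) :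
    orc R S f ≤ I :=
  sInf_le h

theorem orc_zero : orc R S (0 : S) = ⊥ :=
  le_bot_iff.mp (orc_le_of_mem_map (Submodule.zero_mem _))

theorem orc_mul_le (hor : IsOhmRushAlgebra R S) (f g : S) :
    orc R S (f * g) ≤ orc R S f * orc R S g := by
  apply orc_le_of_mem_map
  rw [Ideal.map_mul]
  exact Ideal.mul_mem_mul (hor f) (hor g)

theorem orc_fg (hor : IsOhmRushAlgebra R S) (f : S) : (orc R S f).FG := by
  classical
  obtain ⟨T, hT, hfT⟩ := Submodule.mem_span_finite_of_mem_span (hor f)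
  obtain ⟨u, hu, rfl⟩ := Finset.subset_set_image_iff.mp hT
  refine ⟨u, le_antisymm (Ideal.span_le.mpr hu) (orc_le_of_mem_map ?_)⟩
  rwa [Ideal.map_span, ← Finset.coe_image (f := algebraMap R S)]

theorem orc_algebraMap_mul [Module.Flat R S] (hor : IsOhmRushAlgebra R S) (r : R) (f : S) :
    orc R S (algebraMap R S r * f) = Ideal.span {r} * orc R S f := by
  refine le_antisymm (orc_le_of_mem_map ?_) (Ideal.span_singleton_mul_le_iff.mpr fun x hx => ?_)
  · rw [Ideal.map_mul]
    exact Ideal.mul_mem_mul (Ideal.mem_map_of_mem _ (Ideal.mem_span_singleton_self r)) (hor f)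
  · refine Submodule.mem_sInf.mpr fun I hI => ?_
    simpa [mul_comm] using
      orc_le_of_mem_map (Ideal.mem_map_colon_singleton_of_algebraMap_mul_mem hI) hx

variable [IsDomain R] [Module.Flat R S] {m : Ideal R} [m.IsPrime]
  [ValuationRing (Localization.AtPrime m)]

theorem exists_algebraMap_mul_eq_algebraMap_mul_notMem_map (hor : IsOhmRushAlgebra R S)
    {f : S} (hf : f ≠ 0) :
    ∃ w ∉ m, ∃ (a : R) (f₁ : S), f₁ ∉ m.map (algebraMap R S) ∧
      algebraMap R S w * f = algebraMap R S a * f₁ := by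
  obtain ⟨a, ha, w, hw, hwa⟩ :=
    Ideal.exists_mem_notMem_span_singleton_mul_le_span_singleton (m := m) (orc_fg hor f)
  have ha0 : a ≠ 0 := by
    rintro rfl
    have hw0 : w ≠ 0 := fun h => hw (h ▸ m.zero_mem)
    have horc : orc R S f = ⊥ := by simpa [Ideal.mul_eq_bot, hw0] using hwa
    exact hf (by simpa [horc] using hor f)
  obtain ⟨f₁, hf₁⟩ : algebraMap R S a ∣ algebraMap R S w * f := by
    rw [← orc_algebraMap_mul hor] at hwa
    simpa [Ideal.map_span, Ideal.mem_span_singleton] using Ideal.map_mono hwa (hor _)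
  refine ⟨w, hw, a, f₁, fun hf₁m => hw ?_, hf₁⟩
  suffices Ideal.span {a} * Ideal.span {w} ≤ Ideal.span {a} * m by
    simpa using (Ideal.span_singleton_mul_right_mono ha0).mp this
  calc Ideal.span {a} * Ideal.span {w} ≤ Ideal.span {w} * orc R S f := by
        rw [mul_comm]
        exact Ideal.mul_mono_right ((Ideal.span_singleton_le_iff_mem _).mpr ha)
    _ = orc R S (algebraMap R S a * f₁) := by rw [← hf₁, orc_algebraMap_mul hor]
    _ ≤ Ideal.span {a} * m := orc_le_of_mem_map (by
        rw [Ideal.map_mul]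
        exact Ideal.mul_mem_mul (Ideal.mem_map_of_mem _ (Ideal.mem_span_singleton_self a)) hf₁m)

theorem exists_notMem_span_singleton_mul_orc_mul_orc_le (hor : IsOhmRushAlgebra R S)
    (hmS : (m.map (algebraMap R S)).IsPrime) (f g : S) :
    ∃ c ∉ m, Ideal.span {c} * (orc R S f * orc R S g) ≤ orc R S (f * g) := by
  obtain rfl | hf := eq_or_ne f 0
  · exact ⟨1, Ideal.IsPrime.one_notMem ‹_›, by simp [orc_zero]⟩
  obtain rfl | hg := eq_or_ne g 0
  · exact ⟨1, Ideal.IsPrime.one_notMem ‹_›, by simp [orc_zero]⟩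
  obtain ⟨w, hw, a, f₁, hf₁, hwf⟩ :=
    exists_algebraMap_mul_eq_algebraMap_mul_notMem_map (m := m) hor hf
  obtain ⟨w', hw', b, g₁, hg₁, hwg⟩ :=
    exists_algebraMap_mul_eq_algebraMap_mul_notMem_map (m := m) hor hg
  obtain ⟨c, hc, hcm⟩ : ∃ c ∈ orc R S (f₁ * g₁), c ∉ m :=
    SetLike.not_le_iff_exists.mp fun hle =>
      hmS.mul_notMem hf₁ hg₁ (Ideal.map_mono hle (hor _))
  refine ⟨c, hcm, ?_⟩
  have hww' : w * w' ≠ 0 :=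
    mul_ne_zero (fun h => hw (h ▸ m.zero_mem)) (fun h => hw' (h ▸ m.zero_mem))
  rw [← Ideal.span_singleton_mul_right_mono hww']
  calc Ideal.span {w * w'} * (Ideal.span {c} * (orc R S f * orc R S g))
      = Ideal.span {c} * (orc R S (algebraMap R S w * f) * orc R S (algebraMap R S w' * g)) := by
        rw [orc_algebraMap_mul hor, orc_algebraMap_mul hor,
          ← Ideal.span_singleton_mul_span_singleton]
        ring
    _ = Ideal.span {a * b} * (Ideal.span {c} * (orc R S f₁ * orc R S g₁)) := by
        rw [hwf, hwg, orc_algebraMap_mul hor, orc_algebraMap_mul hor,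
          ← Ideal.span_singleton_mul_span_singleton]
        ring
    _ ≤ Ideal.span {a * b} * orc R S (f₁ * g₁) :=
        Ideal.mul_mono_right (Ideal.mul_le_left.trans ((Ideal.span_singleton_le_iff_mem _).mpr hc))
    _ = Ideal.span {w * w'} * orc R S (f * g) := by
        rw [← orc_algebraMap_mul hor, ← orc_algebraMap_mul hor, map_mul, map_mul,
          mul_mul_mul_comm, ← hwf, ← hwg, mul_mul_mul_comm]

end OhmRush

/-- If `R` is a Prüfer domain and `S` is a faithfully flat Ohm-Rush `R`-algebra such that
`mS` is prime for every maximal ideal `m` of `R`, then `S` is a Gaussian `R`-algebra. -/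
theorem isGaussianAlgebra_of_prufer (R : Type*) [CommRing R] [IsDomain R]
    (hPruf : ∀ (P : Ideal R) (hP : P.IsMaximal),
      haveI := hP.isPrime
      ValuationRing (Localization.AtPrime P))
    (S : Type*) [CommRing S] [Algebra R S]
    (hff : Module.FaithfullyFlat R S) (hor : IsOhmRushAlgebra R S)
    (hprime : ∀ m : Ideal R, m.IsMaximal → (m.map (algebraMap R S)).IsPrime) :
    IsGaussianAlgebra R S := by
  refine ⟨hor, fun f g => le_antisymm (orc_mul_le hor f g) ?_⟩
  refine Ideal.le_of_forall_isMaximal_exists_notMem_span_singleton_mul_le fun m hm => ?_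
  have := hm.isPrime
  have := hPruf m hm
  exact exists_notMem_span_singleton_mul_orc_mul_orc_le hor (hprime m hm) f g
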